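/- arXiv:math/0608755 — 7 statements merged into one kernel-verified Lean document; each statement's English description precedes it below -/
import Mathlib

section
/- Let q be a prime power and F_q the finite field with q elements. Let R be a commutative ring containing F_q (an F_q-algebra), W ⊆ R an F_q-subspace of finite dimension d, and f ∈ R with f ∉ W. If k is a nonnegative integer such that d(q−1) > l_q(k) (i.e. d > l_q(k)/(q−1)), then ∑_{w ∈ W} (f + w)^k = 0 in R. -/
/-!
Write `w = ∑ₐ cₐ bₐ` in a basis of `W` and `k = ∑ᵢ kᵢ qⁱ` in base `q`. Since `x ↦ x^q` is
additive on `R` and fixes `F`, `(f + w)^k = ∏ᵢ (f^{qⁱ} + ∑ₐ cₐ bₐ^{qⁱ})^{kᵢ}`, a polynomial in the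
coordinates `c ∈ F^d` of total degree at most `l_q(k) < d(q-1)`. Summing any such polynomial over
`F^d` gives zero (the Chevalley–Warning lemma).
-/

/-- `lq q k` is the sum of the base-`q` digits of `k`. -/
def lq (q k : ℕ) : ℕ := (Nat.digits q k).sum

open MvPolynomial

theorem lq_eq_mod_add_lq_div {q : ℕ} (hq : 1 < q) (k : ℕ) : lq q k = k % q + lq q (k / q) := by
  rcases k.eq_zero_or_pos with rfl | hk
  · simp [lq]
  · rw [lq, Nat.digits_def' hq hk, List.sum_cons, lq]

theorem MvPolynomial.sum_eval_algebraMap_eq_zero {K σ R : Type*} [Field K] [Fintype K]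
    [Fintype σ] [DecidableEq σ] [CommRing R] [Algebra K R] (p : MvPolynomial σ R)
    (h : p.totalDegree < (Fintype.card K - 1) * Fintype.card σ) :
    ∑ x : σ → K, eval (algebraMap K R ∘ x) p = 0 := by
  simp only [eval_eq', Function.comp_apply, ← map_pow, ← map_prod]
  rw [Finset.sum_comm]
  refine Finset.sum_eq_zero fun m hm => ?_
  have hmonomial : ∑ x : σ → K, ∏ i, x i ^ m i = 0 := by
    simpa [eval_monomial, Finsupp.prod_fintype] using
      sum_eval_eq_zero (monomial m (1 : K))
        ((totalDegree_monomial_le m 1).trans_lt ((le_totalDegree hm).trans_lt h))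
  rw [← Finset.mul_sum, ← map_sum, hmonomial, map_zero, mul_zero]

theorem add_sum_smul_pow_card {F R σ : Type*} [Field F] [Fintype F] [Fintype σ] [CommRing R]
    [Algebra F R] (f : R) (c : σ → F) (v : σ → R) :
    (f + ∑ a, c a • v a) ^ Fintype.card F =
      f ^ Fintype.card F + ∑ a, c a • v a ^ Fintype.card F := by
  simpa using map_add (FiniteField.frobeniusAlgHom F R) f (∑ a, c a • v a)

theorem totalDegree_C_add_sum_monomial_single_le {σ R : Type*} [Fintype σ] [CommRing R]
    (f : R) (v : σ → R) :
    (C f + ∑ a, monomial (Finsupp.single a 1) (v a) : MvPolynomial σ R).totalDegree ≤ 1 := by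
  refine (totalDegree_add _ _).trans (max_le (by simp) ((totalDegree_finsetSum _ _).trans ?_))
  exact Finset.sup_le fun a _ => (totalDegree_monomial_le _ _).trans (by simp)

theorem exists_totalDegree_le_lq_eval_eq {F R σ : Type*} [Field F] [Fintype F] [Fintype σ]
    [CommRing R] [Algebra F R] (k : ℕ) (f : R) (v : σ → R) :
    ∃ P : MvPolynomial σ R, P.totalDegree ≤ lq (Fintype.card F) k ∧
      ∀ c : σ → F, eval (algebraMap F R ∘ c) P = (f + ∑ a, c a • v a) ^ k := by
  set q := Fintype.card F
  have hq : 1 < q := Fintype.one_lt_card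
  induction k using Nat.strong_induction_on generalizing f v with
  | _ k ih =>
    rcases k.eq_zero_or_pos with rfl | hk
    · exact ⟨1, by simp, by simp⟩
    obtain ⟨P, hPdeg, hPeval⟩ := ih (k / q) (Nat.div_lt_self hk hq) (f ^ q) (v · ^ q)
    refine ⟨(C f + ∑ a, monomial (Finsupp.single a 1) (v a)) ^ (k % q) * P, ?_, fun c => ?_⟩
    · rw [lq_eq_mod_add_lq_div hq]
      refine (totalDegree_mul _ _).trans (add_le_add ((totalDegree_pow _ _).trans ?_) hPdeg)
      simpa using Nat.mul_le_mul_left (k % q) (totalDegree_C_add_sum_monomial_single_le f v)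
    · conv_rhs => rw [← Nat.mod_add_div k q, pow_add, pow_mul, add_sum_smul_pow_card, ← hPeval]
      simp [eval_monomial, Algebra.smul_def, mul_comm]

theorem sum_add_sum_smul_pow_eq_zero {F R σ : Type*} [Field F] [Fintype F] [Fintype σ]
    [DecidableEq σ] [CommRing R] [Algebra F R] (f : R) (v : σ → R) {k : ℕ}
    (hk : lq (Fintype.card F) k < Fintype.card σ * (Fintype.card F - 1)) :
    ∑ c : σ → F, (f + ∑ a, c a • v a) ^ k = 0 := by
  obtain ⟨P, hPdeg, hPeval⟩ := exists_totalDegree_le_lq_eval_eq (F := F) k f v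
  simp_rw [← hPeval]
  exact sum_eval_algebraMap_eq_zero P (by rw [mul_comm]; exact hPdeg.trans_lt hk)

theorem statement0_general (F : Type*) [Field F] [Fintype F] (q : ℕ) (hq : q = Fintype.card F)
    (R : Type*) [CommRing R] [Algebra F R]
    (W : Submodule F R) [Module.Finite F W] (d : ℕ) (hd : Module.finrank F W = d)
    (f : R) (k : ℕ) (hk : lq q k < d * (q - 1)) :
    ∑ᶠ w ∈ (W : Set R), (f + w) ^ k = 0 := by
  subst hq
  let b : Module.Basis (Fin d) F W := Module.finBasisOfFinrankEq F W hd
  rw [← finsum_set_coe_eq_finsum_mem]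
  change ∑ᶠ w : W, (f + (w : R)) ^ k = 0
  rw [← finsum_comp_equiv b.equivFun.toEquiv.symm, finsum_eq_sum_of_fintype]
  simpa [Module.Basis.equivFun_symm_apply] using
    sum_add_sum_smul_pow_eq_zero (F := F) f (fun a => (b a : R)) (by simpa using hk)

/-- Let `q` be a prime power and `F = F_q` the finite field with `q` elements.
Let `R` be a commutative ring containing `F_q`, `W ⊆ R` an `F_q`-subspace of finite dimension
`d`, and `f ∈ R` with `f ∉ W`. If `k` is a nonnegative integer with `d(q−1) > l_q(k)`, then
`∑_{w ∈ W} (f + w)^k = 0` in `R`. -/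
theorem statement0 (F : Type*) [Field F] [Fintype F] (q : ℕ) (hq : q = Fintype.card F)
    (R : Type*) [CommRing R] [Algebra F R]
    (hcont : Function.Injective (algebraMap F R))
    (W : Submodule F R) [Module.Finite F W] (d : ℕ) (hd : Module.finrank F W = d)
    (f : R) (hf : f ∉ W) (k : ℕ) (hk : lq q k < d * (q - 1)) :
    ∑ᶠ w ∈ (W : Set R), (f + w) ^ k = 0 :=
  statement0_general F q hq R W d hd f k hk
end

section
/- For integers s ≥ 1 and d ≥ 0 with d(q − 1) > l_q(s), the power sum S_d(s) := ∑_{a monic, deg a = d} a^s equals 0 in F_q[x]. -/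
open Polynomial

private lemma aux_ofDigits (q : ℕ) (L : List ℕ) :
    ∑ j ∈ Finset.range L.length, L.getD j 0 * q ^ j = Nat.ofDigits q L := by
  induction L with
  | nil => simp
  | cons a t ih =>
    rw [List.length_cons, Finset.sum_range_succ', Nat.ofDigits_cons]
    simp only [List.getD_cons_succ, List.getD_cons_zero, pow_zero, mul_one, pow_succ]
    rw [← ih, Finset.mul_sum, add_comm]
    exact congrArg (a + ·) (Finset.sum_congr rfl fun x _ => by ring)

private lemma aux_list_sum (L : List ℕ) :
    L.sum = ∑ j ∈ Finset.range L.length, L.getD j 0 := by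
  induction L with
  | nil => simp
  | cons a t ih =>
    rw [List.length_cons, Finset.sum_range_succ', List.sum_cons, ih]
    simp [add_comm]

set_option maxHeartbeats 1000000 in
/-- For integers `s ≥ 1` and `d ≥ 0` with `d(q − 1) > l_q(s)`, the power sum
`S_d(s) = ∑_{a monic, deg a = d} a^s` equals `0` in `F_q[x]`.  The sum over monic polynomials
of degree `d` is realized as the sum over all coefficient tuples `c : Fin d → F` of
`(X^d + ∑ i, c i • X^i)^s`. -/
theorem statement1 (F : Type*) [Field F] [Fintype F] (q : ℕ) (hq : q = Fintype.card F)
    (s d : ℕ) (hs : 1 ≤ s) (h : lq q s < d * (q - 1)) :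
    ∑ c : Fin d → F, (X ^ d + ∑ i : Fin d, C (c i) * X ^ (i : ℕ)) ^ s = (0 : F[X]) := by
  classical
  set p := ringChar F with hp_def
  haveI : CharP F p := ringChar.charP F
  haveI hp : Fact p.Prime := ⟨CharP.char_is_prime F p⟩
  obtain ⟨n, -, hcard⟩ := FiniteField.card F p
  have hqpn : q = p ^ (n : ℕ) := hq.trans hcard
  set L := Nat.digits q s with hL
  set N := L.length with hN
  set e : ℕ → ℕ := fun j => L.getD j 0 with he
  have hs_eq : s = ∑ j ∈ Finset.range N, e j * q ^ j := by
    rw [he, hN, hL, aux_ofDigits, Nat.ofDigits_digits]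
  have hl_eq : lq q s = ∑ j ∈ Finset.range N, e j := aux_list_sum L
  -- The multivariate polynomial encoding the summand
  set P : MvPolynomial (Fin d) F[X] :=
    ∏ j ∈ Finset.range N,
      (MvPolynomial.C (X ^ (d * q ^ j)) +
        ∑ i : Fin d, MvPolynomial.X i * MvPolynomial.C (X ^ ((i : ℕ) * q ^ j))) ^ e j with hP
  -- Step 1: evaluation of P gives the summand
  have heval : ∀ c : Fin d → F,
      MvPolynomial.eval (fun i => (C (c i) : F[X])) P
        = (X ^ d + ∑ i : Fin d, C (c i) * X ^ (i : ℕ)) ^ s := by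
    intro c
    rw [hP, map_prod]
    have hfactor : ∀ j : ℕ,
        (X ^ (d * q ^ j) + ∑ i : Fin d, C (c i) * X ^ ((i : ℕ) * q ^ j))
          = (X ^ d + ∑ i : Fin d, C (c i) * X ^ (i : ℕ)) ^ (q ^ j) := by
      intro j
      have hqj : q ^ j = p ^ ((n : ℕ) * j) := by rw [hqpn, ← pow_mul]
      rw [hqj, add_pow_char_pow, sum_pow_char_pow]
      congr 1
      · rw [← pow_mul]
      · refine Finset.sum_congr rfl fun i _ => ?_
        rw [mul_pow, ← pow_mul, ← map_pow, ← hqj]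
        have hcx : c i ^ q ^ j = c i := by
          rw [hq]; exact FiniteField.pow_card_pow j (c i)
        rw [hcx]
    have : ∀ j ∈ Finset.range N,
        MvPolynomial.eval (fun i => (C (c i) : F[X]))
          ((MvPolynomial.C (X ^ (d * q ^ j)) +
            ∑ i : Fin d, MvPolynomial.X i * MvPolynomial.C (X ^ ((i : ℕ) * q ^ j))) ^ e j)
          = ((X ^ d + ∑ i : Fin d, C (c i) * X ^ (i : ℕ)) ^ (q ^ j)) ^ e j := by
      intro j _
      rw [map_pow, map_add, map_sum, MvPolynomial.eval_C]
      simp only [map_mul, MvPolynomial.eval_C, MvPolynomial.eval_X]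
      rw [hfactor j]
    rw [Finset.prod_congr rfl this]
    conv_rhs => rw [hs_eq]
    rw [← Finset.prod_pow_eq_pow_sum]
    exact Finset.prod_congr rfl fun j _ => by rw [← pow_mul, mul_comm (e j)]
  -- Step 2: total degree bound
  have hdeg : P.totalDegree ≤ lq q s := by
    rw [hl_eq, hP]
    refine (MvPolynomial.totalDegree_finset_prod _ _).trans (Finset.sum_le_sum fun j _ => ?_)
    refine (MvPolynomial.totalDegree_pow _ _).trans ?_
    have h1 : (MvPolynomial.C (X ^ (d * q ^ j)) +
        ∑ i : Fin d, MvPolynomial.X i * MvPolynomial.C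
          (X ^ ((i : ℕ) * q ^ j)) : MvPolynomial (Fin d) F[X]).totalDegree ≤ 1 := by
      refine (MvPolynomial.totalDegree_add _ _).trans (max_le ?_ ?_)
      · rw [MvPolynomial.totalDegree_C]
        exact Nat.zero_le _
      · refine (MvPolynomial.totalDegree_finset_sum _ _).trans (Finset.sup_le fun i _ => ?_)
        refine (MvPolynomial.totalDegree_mul _ _).trans ?_
        rw [MvPolynomial.totalDegree_X, MvPolynomial.totalDegree_C]
    calc e j * (MvPolynomial.C (X ^ (d * q ^ j)) +
          ∑ i : Fin d, MvPolynomial.X i * MvPolynomial.C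
            (X ^ ((i : ℕ) * q ^ j)) : MvPolynomial (Fin d) F[X]).totalDegree
        ≤ e j * 1 := Nat.mul_le_mul_left _ h1
      _ = e j := mul_one _
  -- Step 3: sum over c of the evaluation is 0
  have hzero : ∑ c : Fin d → F, MvPolynomial.eval (fun i => (C (c i) : F[X])) P = 0 := by
    have hrep : ∀ c : Fin d → F,
        MvPolynomial.eval (fun i => (C (c i) : F[X])) P
          = ∑ v ∈ P.support, MvPolynomial.coeff v P * ∏ i : Fin d, (C (c i) : F[X]) ^ v i := by
      intro c
      conv_lhs => rw [P.as_sum]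
      rw [map_sum]
      refine Finset.sum_congr rfl fun v _ => ?_
      rw [MvPolynomial.eval_monomial]
      congr 1
      exact Finsupp.prod_fintype _ _ fun i => pow_zero _
    rw [Finset.sum_congr rfl fun c _ => hrep c, Finset.sum_comm]
    refine Finset.sum_eq_zero fun v hv => ?_
    have hsmall : ∃ i : Fin d, v i < q - 1 := by
      by_contra hcon
      push_neg at hcon
      have h1 : d * (q - 1) ≤ ∑ i : Fin d, v i := by
        calc d * (q - 1) = ∑ _i : Fin d, (q - 1) := by
              simp [Finset.sum_const, mul_comm]
          _ ≤ ∑ i : Fin d, v i := Finset.sum_le_sum fun i _ => hcon i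
      have h2 : (∑ i : Fin d, v i) ≤ P.totalDegree := by
        have := MvPolynomial.le_totalDegree hv
        rwa [Finsupp.sum_fintype _ _ (fun i => rfl)] at this
      omega
    obtain ⟨i, hi⟩ := hsmall
    rw [← Finset.mul_sum]
    have : ∑ c : Fin d → F, ∏ k : Fin d, (C (c k) : F[X]) ^ v k
        = ∏ k : Fin d, ∑ x : F, (C x : F[X]) ^ v k := (Fintype.prod_sum (κ := fun _ : Fin d => F) (fun k x => (C x : F[X]) ^ v k)).symm
    rw [this, Finset.prod_eq_zero (Finset.mem_univ i), mul_zero]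
    have : ∑ x : F, (C x : F[X]) ^ v i = C (∑ x : F, x ^ v i) := by
      rw [map_sum]
      exact Finset.sum_congr rfl fun x _ => (map_pow _ _ _).symm
    rw [this]
    have h0 : (∑ x : F, x ^ v i) = 0 :=
      FiniteField.sum_pow_lt_card_sub_one F (v i) (hq ▸ hi)
    rw [h0, map_zero]
  calc ∑ c : Fin d → F, (X ^ d + ∑ i : Fin d, C (c i) * X ^ (i : ℕ)) ^ s
      = ∑ c : Fin d → F, MvPolynomial.eval (fun i => (C (c i) : F[X])) P :=
        Finset.sum_congr rfl fun c _ => (heval c).symm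
    _ = 0 := hzero
end

section
/- For every positive integer s, the zeta value ζ(−(q−1)s) := ∑_{d≥0} S_d((q−1)s) equals 0 in F_q[x] (the sum is finite since S_d((q−1)s) = 0 once d(q−1) > l_q((q−1)s)). -/
open Polynomial

/-- `Spow F d s = ∑_{a monic, deg a = d} a^s ∈ F[x]`, the power sum over all monic polynomials
of degree `d`, realized as the sum over all coefficient tuples `c : Fin d → F`. -/
noncomputable def Spow (F : Type*) [Field F] [Fintype F] (d s : ℕ) : F[X] :=
  ∑ c : Fin d → F, (X ^ d + ∑ i : Fin d, C (c i) * X ^ (i : ℕ)) ^ s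

section Aux

variable {F : Type*} [Field F] [Fintype F]

/-- Key vanishing lemma: summing the `m`-th power of an affine family over an `F`-vector
space of dimension `D > m` gives zero, because in each multinomial term some coordinate
appears with exponent `0`, producing a factor `card F = 0`. -/
lemma sum_pow_eq_zero_of_lt {D m : ℕ} (hm : m < D) (b : F[X]) (v : Fin D → F[X]) :
    ∑ c : Fin D → F, (b + ∑ i : Fin D, C (c i) * v i) ^ m = 0 := by
  classical
  have hW : ∀ c : Fin D → F, b + ∑ i : Fin D, C (c i) * v i
      = ∑ o : Option (Fin D), C (o.elim 1 c) * o.elim b v := by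
    intro c
    rw [Fintype.sum_option]
    simp
  calc ∑ c : Fin D → F, (b + ∑ i : Fin D, C (c i) * v i) ^ m
      = ∑ c : Fin D → F, ∑ φ : Fin m → Option (Fin D),
          ∏ j, C ((φ j).elim 1 c) * (φ j).elim b v := by
        refine Finset.sum_congr rfl fun c _ => ?_
        rw [hW, Fintype.sum_pow]
    _ = ∑ φ : Fin m → Option (Fin D), ∑ c : Fin D → F,
          ∏ j, C ((φ j).elim 1 c) * (φ j).elim b v := Finset.sum_comm
    _ = 0 := ?_
  refine Finset.sum_eq_zero fun φ _ => ?_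
  -- there is an index `i₀` avoided by `φ`
  obtain ⟨i₀, hi₀⟩ : ∃ i : Fin D, ∀ j, φ j ≠ some i := by
    by_contra h
    push_neg at h
    have hsub : (Finset.univ.image (some : Fin D → Option (Fin D))) ⊆ Finset.univ.image φ := by
      intro o ho
      simp only [Finset.mem_image] at ho ⊢
      obtain ⟨i, -, rfl⟩ := ho
      obtain ⟨j, hj⟩ := h i
      exact ⟨j, Finset.mem_univ j, hj⟩
    have h1 : D ≤ (Finset.univ.image φ).card := by
      have := Finset.card_le_card hsub
      rwa [Finset.card_image_of_injective _ (Option.some_injective _), Finset.card_univ,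
        Fintype.card_fin] at this
    have h2 : (Finset.univ.image φ).card ≤ m := by
      calc (Finset.univ.image φ).card ≤ (Finset.univ : Finset (Fin m)).card :=
            Finset.card_image_le
        _ = m := by simp
    omega
  have key : ∀ c : Fin D → F,
      (∏ j, C ((φ j).elim 1 c) * (φ j).elim b v)
      = C (∏ j, (φ j).elim 1 c) * ∏ j, (φ j).elim b v := by
    intro c; rw [Finset.prod_mul_distrib, map_prod]
  simp only [key]
  rw [← Finset.sum_mul, ← map_sum]
  suffices h : (∑ c : Fin D → F, ∏ j, (φ j).elim 1 c) = 0 by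
    rw [h, map_zero, zero_mul]
  -- the summand does not depend on the coordinate `i₀`
  rw [← Equiv.sum_comp (Equiv.funSplitAt i₀ F).symm (fun c : Fin D → F => ∏ j, (φ j).elim 1 c),
    Fintype.sum_prod_type]
  have hconst : ∀ (t : F) (c' : { j // j ≠ i₀ } → F),
      (∏ j, (φ j).elim 1 ((Equiv.funSplitAt i₀ F).symm (t, c'))) = ∏ j, (φ j).elim 1 ((Equiv.funSplitAt i₀ F).symm (0, c')) := by
    intro t c'
    refine Finset.prod_congr rfl fun j _ => ?_
    cases hφ : φ j with
    | none => rfl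
    | some i =>
      have hne : i ≠ i₀ := fun h => hi₀ j (h ▸ hφ)
      show ((Equiv.funSplitAt i₀ F).symm (t, c')) i = ((Equiv.funSplitAt i₀ F).symm (0, c')) i
      simp [Equiv.funSplitAt, Equiv.piSplitAt, hne]
  calc ∑ t : F, ∑ c' : { j // j ≠ i₀ } → F, ∏ j, (φ j).elim 1 ((Equiv.funSplitAt i₀ F).symm (t, c'))
      = ∑ _t : F, ∑ c' : { j // j ≠ i₀ } → F, ∏ j, (φ j).elim 1 ((Equiv.funSplitAt i₀ F).symm (0, c')) := by
        refine Finset.sum_congr rfl fun t _ => Finset.sum_congr rfl fun c' _ => hconst t c'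
    _ = (Fintype.card F : F) *
          ∑ c' : { j // j ≠ i₀ } → F, ∏ j, (φ j).elim 1 ((Equiv.funSplitAt i₀ F).symm (0, c')) := by
        rw [Finset.sum_const, Finset.card_univ, nsmul_eq_mul]
    _ = 0 := by rw [Nat.cast_card_eq_zero, zero_mul]

/-- The sum of `f^m` over all polynomials `f` of degree `< M` (all coefficient tuples). -/
noncomputable def Tsum (F : Type*) [Field F] [Fintype F] (M m : ℕ) : F[X] :=
  ∑ c : Fin M → F, (∑ i : Fin M, C (c i) * X ^ (i : ℕ)) ^ m

lemma Tsum_eq_zero_of_lt {M m : ℕ} (hm : m < M) : Tsum F M m = 0 := by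
  have := sum_pow_eq_zero_of_lt (F := F) hm 0 (fun i : Fin M => X ^ (i : ℕ))
  simpa [Tsum] using this

lemma Spow_eq_zero_of_lt {d m : ℕ} (hm : m < d) : Spow F d m = 0 :=
  sum_pow_eq_zero_of_lt hm (X ^ d) (fun i : Fin d => X ^ (i : ℕ))

lemma Tsum_succ (M m : ℕ) (hdvd : Fintype.card F - 1 ∣ m) :
    Tsum F (M + 1) m = Tsum F M m - Spow F M m := by
  classical
  -- reindex tuples over `Fin (M+1)` by pairs (initial segment, last coordinate)
  have hbij : Function.Bijective
      (fun p : (Fin M → F) × F => (Fin.snoc p.1 p.2 : Fin (M + 1) → F)) := by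
    constructor
    · rintro ⟨c, t⟩ ⟨c', t'⟩ h
      have ht : t = t' := by
        have := congrFun h (Fin.last M); simpa using this
      have hc : c = c' := by
        funext i
        have := congrFun h (Fin.castSucc i); simpa using this
      rw [ht, hc]
    · intro f
      exact ⟨(Fin.init f, f (Fin.last M)), Fin.snoc_init_self f⟩
  have step1 : Tsum F (M + 1) m = ∑ t : F, ∑ c : Fin M → F,
      (C t * X ^ M + ∑ i : Fin M, C (c i) * X ^ (i : ℕ)) ^ m := by
    rw [Tsum, ← Function.Bijective.sum_comp hbij
      (fun c : Fin (M + 1) → F => (∑ i : Fin (M + 1), C (c i) * X ^ (i : ℕ)) ^ m),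
      Fintype.sum_prod_type_right]
    refine Finset.sum_congr rfl fun t _ => Finset.sum_congr rfl fun c _ => ?_
    congr 1
    rw [Fin.sum_univ_castSucc]
    simp [add_comm]
  rw [step1]
  -- split off the `t = 0` term
  rw [← Finset.add_sum_erase Finset.univ _ (Finset.mem_univ (0 : F))]
  have h0 : (∑ c : Fin M → F,
      (C (0 : F) * X ^ M + ∑ i : Fin M, C (c i) * X ^ (i : ℕ)) ^ m) = Tsum F M m := by
    simp [Tsum]
  rw [h0]
  -- for each nonzero `t`, reindex `c ↦ t • c`
  have hunit : ∀ t : F, t ≠ 0 → (∑ c : Fin M → F,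
      (C t * X ^ M + ∑ i : Fin M, C (c i) * X ^ (i : ℕ)) ^ m) = Spow F M m := by
    intro t ht
    have hb : Function.Bijective (fun c : Fin M → F => fun i => t * c i) := by
      constructor
      · intro c c' h
        funext i
        have := congrFun h i
        exact mul_left_cancel₀ ht this
      · intro c
        exact ⟨fun i => t⁻¹ * c i, by funext i; simp [mul_inv_cancel_left₀ ht]⟩
    rw [← Function.Bijective.sum_comp hb (fun c : Fin M → F =>
      (C t * X ^ M + ∑ i : Fin M, C (c i) * X ^ (i : ℕ)) ^ m)]
    have htm : t ^ m = 1 := by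
      obtain ⟨k, rfl⟩ := hdvd
      rw [pow_mul, FiniteField.pow_card_sub_one_eq_one t ht, one_pow]
    rw [Spow]
    refine Finset.sum_congr rfl fun c _ => ?_
    have : (C t * X ^ M + ∑ i : Fin M, C (t * c i) * X ^ (i : ℕ))
        = C t * (X ^ M + ∑ i : Fin M, C (c i) * X ^ (i : ℕ)) := by
      rw [mul_add, Finset.mul_sum]
      congr 1
      refine Finset.sum_congr rfl fun i _ => ?_
      rw [map_mul, mul_assoc]
    simp only [this]
    rw [mul_pow, ← map_pow, htm, map_one, one_mul]
  rw [Finset.sum_congr rfl fun t ht => hunit t (Finset.ne_of_mem_erase ht)]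
  rw [Finset.sum_const, Finset.card_erase_of_mem (Finset.mem_univ _), Finset.card_univ]
  have hcard : ((Fintype.card F - 1 : ℕ) : F[X]) = -1 := by
    have h2 : (2 : ℕ) ≤ Fintype.card F := Fintype.one_lt_card
    have : ((Fintype.card F : ℕ) : F[X]) = 0 := by
      have hF : ((Fintype.card F : ℕ) : F) = 0 := Nat.cast_card_eq_zero F
      rw [← map_natCast (C : F →+* F[X]), hF, map_zero]
    rw [Nat.cast_sub (by omega), this, Nat.cast_one, zero_sub]
  rw [nsmul_eq_mul, hcard]
  ring

lemma sum_Spow_range (M m : ℕ) (hm : 1 ≤ m) (hdvd : Fintype.card F - 1 ∣ m) :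
    ∑ d ∈ Finset.range M, Spow F d m = -Tsum F M m := by
  induction M with
  | zero =>
    simp [Tsum, zero_pow (by omega : m ≠ 0)]
  | succ M ih =>
    rw [Finset.sum_range_succ, ih, Tsum_succ M m hdvd]
    ring

end Aux

/-- For every positive integer `s`, the zeta value
`ζ(−(q−1)s) = ∑_{d ≥ 0} S_d((q−1)s)` equals `0` in `F_q[x]` (the sum is finite since
`S_d((q−1)s) = 0` once `d(q−1) > l_q((q−1)s)`; it is formalized as a `finsum`). -/
theorem statement2 (F : Type*) [Field F] [Fintype F] (q : ℕ) (hq : q = Fintype.card F)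
    (s : ℕ) (hs : 1 ≤ s) :
    ∑ᶠ d : ℕ, Spow F d ((q - 1) * s) = 0 := by
  set m : ℕ := (q - 1) * s with hm
  have hq2 : 2 ≤ q := hq ▸ Fintype.one_lt_card
  have hm1 : 1 ≤ m := Nat.mul_pos (by omega) hs
  have hdvd : Fintype.card F - 1 ∣ m := by
    rw [hm, hq]; exact dvd_mul_right _ _
  have hsupp : Function.support (fun d : ℕ => Spow F d m) ⊆ ↑(Finset.range (m + 1)) := by
    intro d hd
    simp only [Finset.coe_range, Set.mem_Iio]
    by_contra h
    push_neg at h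
    exact hd (Spow_eq_zero_of_lt (by omega))
  rw [finsum_eq_sum_of_support_subset _ hsupp,
    sum_Spow_range (m + 1) m hm1 hdvd,
    Tsum_eq_zero_of_lt (Nat.lt_succ_self m), neg_zero]
end

section
/- For A = F_q[x] and a positive integer s, ζ(−s) := ∑_{d≥0} S_d(s) = 0 in F_q[x] if and only if s is a multiple of q − 1. -/
/-!
Write `q = |F|` and `T_D(s) = ∑ b^s` over all polynomials `b` of degree `< D`.

If `q - 1 ∤ s` then `∑_{a ∈ F} a^s = 0`, so `S_d(s)` vanishes at `x = 0` for every `d ≥ 1`,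
whereas `S_0(s) = 1`; hence `ζ(-s)(0) = 1`.

If `q - 1 ∣ s`, then `a^s = 1` for `a ≠ 0`. Splitting a polynomial of degree `< D + 1` as
`b + a x^D` and pulling out `a ≠ 0` gives `T_{D+1} = T_D + (q - 1) S_D = T_D - S_D`, so
`∑_{d < D} S_d(s) = -T_D(s)`, using `T_0(s) = 0^s = 0` for `s ≥ 1`. Finally `T_D(s) = 0` as soon as
`s < (q - 1) D`: in the multinomial expansion of `(∑_i c_i x^i)^s` every monomial `∏ c_i^{k_i}` has
some `k_i < q - 1`, and `∑_{a ∈ F} a^k = 0` for `k < q - 1` (the Chevalley–Warning argument).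
-/

open Polynomial

open Finset

theorem lt_card_sub_one_mul_of_lt (F : Type*) [Fintype F] [Nontrivial F] {s d : ℕ} (h : s < d) :
    s < (Fintype.card F - 1) * d :=
  h.trans_le (Nat.le_mul_of_pos_left d (Nat.sub_pos_of_lt Fintype.one_lt_card))

namespace FiniteField

variable {F : Type*} [Field F] [Fintype F]

theorem sum_pow_eq_zero_of_not_dvd {n : ℕ} (h : ¬ (Fintype.card F - 1) ∣ n) :
    ∑ a : F, a ^ n = 0 := by
  have hn : n ≠ 0 := by rintro rfl; exact h (dvd_zero _)
  have hmod : n % (Fintype.card F - 1) ≠ 0 := fun hm => h (Nat.dvd_of_mod_eq_zero hm)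
  have hpow : ∀ a : F, a ^ n = a ^ (n % (Fintype.card F - 1)) := by
    intro a
    rcases eq_or_ne a 0 with rfl | ha
    · rw [zero_pow hn, zero_pow hmod]
    · conv_lhs => rw [← Nat.div_add_mod n (Fintype.card F - 1)]
      rw [pow_add, pow_mul, pow_card_sub_one_eq_one a ha, one_pow, one_mul]
  simp_rw [hpow]
  exact sum_pow_lt_card_sub_one F _ (Nat.mod_lt _ (Nat.sub_pos_of_lt Fintype.one_lt_card))

theorem sum_prod_pow_eq_zero {σ : Type*} [Fintype σ] [DecidableEq σ] (k : σ → ℕ) {i : σ}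
    (hi : k i < Fintype.card F - 1) : ∑ x : σ → F, ∏ j, x j ^ k j = 0 := by
  rw [← Fintype.prod_sum (fun j (a : F) => a ^ k j)]
  exact prod_eq_zero (mem_univ i) (sum_pow_lt_card_sub_one F _ hi)

theorem sum_sum_smul_pow_eq_zero {σ R : Type*} [Fintype σ] [DecidableEq σ] [CommSemiring R]
    [Algebra F R] (v : σ → R) {n : ℕ} (h : n < (Fintype.card F - 1) * Fintype.card σ) :
    ∑ c : σ → F, (∑ i, c i • v i) ^ n = 0 := by
  simp_rw [sum_pow_eq_sum_piAntidiag, _root_.smul_pow, prod_smul]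
  rw [sum_comm]
  refine sum_eq_zero fun k hk => ?_
  obtain ⟨i, hi⟩ : ∃ i, k i < Fintype.card F - 1 := by
    by_contra! hk'
    have := card_nsmul_le_sum univ k _ fun i _ => hk' i
    rw [(mem_piAntidiag.mp hk).1, smul_eq_mul, card_univ] at this
    rw [mul_comm] at h
    omega
  rw [← mul_sum, ← sum_smul, sum_prod_pow_eq_zero k hi, zero_smul, mul_zero]

theorem sum_add_sum_smul_pow_eq_zero {σ R : Type*} [Fintype σ] [DecidableEq σ] [CommSemiring R]
    [Algebra F R] (w : R) (v : σ → R) {n : ℕ}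
    (h : n < (Fintype.card F - 1) * Fintype.card σ) :
    ∑ c : σ → F, (w + ∑ i, c i • v i) ^ n = 0 := by
  simp_rw [add_comm w, add_pow]
  rw [sum_comm]
  refine sum_eq_zero fun k hk => ?_
  have hkn : k < n + 1 := mem_range.mp hk
  rw [← sum_mul, ← sum_mul, sum_sum_smul_pow_eq_zero v (by omega), zero_mul, zero_mul]

end FiniteField

open FiniteField

/-- `T_D(s)`: the sum of `b ^ s` over all polynomials `b` of degree `< D`, zero included. -/
noncomputable def powSumDegLT (F : Type*) [Field F] [Fintype F] (D s : ℕ) : F[X] :=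
  ∑ c : Fin D → F, (∑ i : Fin D, C (c i) * X ^ (i : ℕ)) ^ s

section PowerSums

variable {F : Type*} [Field F] [Fintype F]

theorem Spow_zero_left (s : ℕ) : Spow F 0 s = 1 := by
  simp [Spow]

theorem Spow_eq_zero_of_lt_s3 {d s : ℕ} (h : s < (Fintype.card F - 1) * d) : Spow F d s = 0 := by
  simp_rw [Spow, C_mul']
  exact sum_add_sum_smul_pow_eq_zero _ _ (by rwa [Fintype.card_fin])

theorem finsum_Spow (s : ℕ) : ∑ᶠ d : ℕ, Spow F d s = ∑ d ∈ range (s + 1), Spow F d s := by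
  refine finsum_eq_sum_of_support_subset _ fun d hd => ?_
  by_contra hds
  exact hd (Spow_eq_zero_of_lt_s3 (lt_card_sub_one_mul_of_lt F (by simpa using hds)))

theorem powSumDegLT_zero_left {s : ℕ} (hs : s ≠ 0) : powSumDegLT F 0 s = 0 := by
  simp [powSumDegLT, hs]

theorem powSumDegLT_eq_zero_of_lt {D s : ℕ} (h : s < (Fintype.card F - 1) * D) :
    powSumDegLT F D s = 0 := by
  simp_rw [powSumDegLT, C_mul']
  exact sum_sum_smul_pow_eq_zero _ (by rwa [Fintype.card_fin])

theorem powSumDegLT_succ_eq_sum (D s : ℕ) :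
    powSumDegLT F (D + 1) s
      = ∑ a : F, ∑ b : Fin D → F, (∑ i : Fin D, C (b i) * X ^ (i : ℕ) + C a * X ^ D) ^ s := by
  rw [powSumDegLT, ← (Fin.snocEquiv fun _ => F).sum_comp, Fintype.sum_prod_type]
  simp [Fin.snocEquiv, Fin.sum_univ_castSucc]

theorem sum_add_C_mul_X_pow_pow {a : F} (ha : a ≠ 0) (D s : ℕ) :
    ∑ b : Fin D → F, (∑ i : Fin D, C (b i) * X ^ (i : ℕ) + C a * X ^ D) ^ s
      = C (a ^ s) * Spow F D s := by
  rw [Spow, mul_sum]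
  refine (Fintype.sum_equiv (Equiv.piCongrRight fun _ => Equiv.mulLeft₀ a ha) _ _
    fun c => ?_).symm
  simp only [Equiv.piCongrRight_apply, Pi.map_apply, Equiv.mulLeft₀_apply, C_mul, C_pow,
    ← mul_pow, mul_add, mul_sum, mul_assoc, add_comm]

theorem powSumDegLT_succ {s : ℕ} (h : (Fintype.card F - 1) ∣ s) (D : ℕ) :
    powSumDegLT F (D + 1) s = powSumDegLT F D s - Spow F D s := by
  classical
  have hunit : ∀ a ∈ univ.erase (0 : F), ∑ b : Fin D → F,
      (∑ i : Fin D, C (b i) * X ^ (i : ℕ) + C a * X ^ D) ^ s = Spow F D s := by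
    intro a ha
    obtain ⟨t, rfl⟩ := h
    rw [sum_add_C_mul_X_pow_pow (ne_of_mem_erase ha), pow_mul,
      pow_card_sub_one_eq_one a (ne_of_mem_erase ha), one_pow, C_1, one_mul]
  have hcard : ((univ.erase (0 : F)).card : F[X]) = -1 := by
    rw [card_erase_of_mem (mem_univ _), card_univ, Nat.cast_pred Fintype.card_pos,
      ← C_eq_natCast, cast_card_eq_zero, C_0, zero_sub]
  rw [powSumDegLT_succ_eq_sum, ← add_sum_erase _ _ (mem_univ 0), sum_congr rfl hunit,
    sum_const, nsmul_eq_mul, hcard]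
  simp [powSumDegLT, sub_eq_add_neg]

theorem sum_range_Spow {s : ℕ} (hs : s ≠ 0) (h : (Fintype.card F - 1) ∣ s) (D : ℕ) :
    ∑ d ∈ range D, Spow F d s = -powSumDegLT F D s := by
  induction D with
  | zero => rw [sum_range_zero, powSumDegLT_zero_left hs, neg_zero]
  | succ D ih => rw [sum_range_succ, ih, powSumDegLT_succ h]; ring

theorem eval_zero_Spow_succ {s : ℕ} (h : ¬ (Fintype.card F - 1) ∣ s) (d : ℕ) :
    eval 0 (Spow F (d + 1) s) = 0 := by
  have heval : ∀ c : Fin (d + 1) → F,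
      eval 0 ((X ^ (d + 1) + ∑ i : Fin (d + 1), C (c i) * X ^ (i : ℕ)) ^ s) = c 0 ^ s := by
    intro c
    simp [eval_finsetSum, Fin.sum_univ_succ]
  rw [Spow, eval_finsetSum, sum_congr rfl fun c _ => heval c,
    ← (Fin.consEquiv fun _ => F).sum_comp, Fintype.sum_prod_type_right]
  simp [sum_pow_eq_zero_of_not_dvd h]

theorem eval_zero_sum_range_Spow {s : ℕ} (h : ¬ (Fintype.card F - 1) ∣ s) (D : ℕ) :
    eval 0 (∑ d ∈ range (D + 1), Spow F d s) = 1 := by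
  simp [eval_finsetSum, sum_range_succ', eval_zero_Spow_succ h, Spow_zero_left]

end PowerSums

/-- For `A = F_q[x]` and a positive integer `s`,
`ζ(−s) = ∑_{d ≥ 0} S_d(s) = 0` in `F_q[x]` if and only if `s` is a multiple of `q − 1`. -/
theorem statement3 (F : Type*) [Field F] [Fintype F] (q : ℕ) (hq : q = Fintype.card F)
    (s : ℕ) (hs : 1 ≤ s) :
    (∑ᶠ d : ℕ, Spow F d s = 0) ↔ (q - 1) ∣ s := by
  subst hq
  rw [finsum_Spow]
  constructor
  · intro hzero
    by_contra hdvd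
    simpa [hzero] using eval_zero_sum_range_Spow hdvd s
  · intro hdvd
    rw [sum_range_Spow (by omega) hdvd,
      powSumDegLT_eq_zero_of_lt (lt_card_sub_one_mul_of_lt F s.lt_succ_self), neg_zero]
end

section
/- Let q ≥ 2 and r ≥ q − 1 be integers and let S be a numerical semigroup of genus g admitting an r-gap structure for q, i.e. L(iq) = i + 1 for all 1 ≤ i ≤ r, L(g + r) = r + 1, and rq ≤ g + r. Then q ∈ S, and every m ∈ S with 1 ≤ m ≤ rq is a multiple of q. (This is the combinatorial content, via Weierstrass semigroups, of the paper's theorem: a function field of genus g over F_q with an r-gap structure at ∞ with r ≥ q−1 has an element of degree q and no elements of degree ≠ iq between 1 and rq.) -/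
/-- The genus of a numerical semigroup `S ⊆ ℕ`: the number of gaps, i.e. the cardinality of
`ℕ ∖ S`. -/
noncomputable def NSgenus (S : AddSubmonoid ℕ) : ℕ := Set.ncard ((S : Set ℕ)ᶜ)

/-- `NSL S n = card {m ∈ S : m ≤ n}`.  (For the Weierstrass semigroup of pole orders at a
rational place `∞`, this is `ℓ(n∞)`.) -/
noncomputable def NSL (S : AddSubmonoid ℕ) (n : ℕ) : ℕ := Set.ncard {m : ℕ | m ∈ S ∧ m ≤ n}

/-- Let `q ≥ 2` and `r ≥ q − 1` be integers and let `S` be a numerical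
semigroup of genus `g` admitting an `r`-gap structure for `q`, i.e. `L(iq) = i + 1` for all
`1 ≤ i ≤ r`, `L(g + r) = r + 1`, and `rq ≤ g + r`.  Then `q ∈ S`, and every `m ∈ S` with
`1 ≤ m ≤ rq` is a multiple of `q`. -/
theorem statement6 (S : AddSubmonoid ℕ) (hfin : ((S : Set ℕ)ᶜ).Finite)
    (q r g : ℕ) (hq : 2 ≤ q) (hr : q - 1 ≤ r) (hg : NSgenus S = g)
    (hgap1 : ∀ i : ℕ, 1 ≤ i → i ≤ r → NSL S (i * q) = i + 1)
    (hgap2 : NSL S (g + r) = r + 1)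
    (hgap3 : r * q ≤ g + r) :
    q ∈ S ∧ ∀ m ∈ S, 1 ≤ m → m ≤ r * q → q ∣ m := by
  have h1r : 1 ≤ r := by omega
  have hmulS : ∀ (j m : ℕ), m ∈ S → j * m ∈ S := by
    intro j m hm
    have := AddSubmonoid.nsmul_mem S hm j
    simpa [nsmul_eq_mul] using this
  set T : Set ℕ := {m : ℕ | m ∈ S ∧ m ≤ r * q} with hTdef
  have hTfin : T.Finite := (Set.finite_Iic (r * q)).subset (fun x hx => hx.2)
  have hTcard : T.ncard = r + 1 := hgap1 r h1r le_rfl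
  -- Step 1: q ∈ S
  have hqS : q ∈ S := by
    by_contra hq'
    have hfin1 : ({m : ℕ | m ∈ S ∧ m ≤ 1 * q}).Finite :=
      (Set.finite_Iic (1 * q)).subset (fun x hx => hx.2)
    have h2 : ({m : ℕ | m ∈ S ∧ m ≤ 1 * q}).ncard = 2 := hgap1 1 le_rfl h1r
    obtain ⟨a, b, ha, hb, hab⟩ := (Set.one_lt_ncard_iff hfin1).mp (by omega)
    -- pick a nonzero element m ∈ S with m ≤ q
    obtain ⟨m, hmS, hmle, hm0⟩ : ∃ m, m ∈ S ∧ m ≤ q ∧ m ≠ 0 := by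
      rcases eq_or_ne a 0 with h | h
      · exact ⟨b, hb.1, by simpa using hb.2, by omega⟩
      · exact ⟨a, ha.1, by simpa using ha.2, h⟩
    have hmq : m < q := lt_of_le_of_ne hmle (by rintro rfl; exact hq' hmS)
    -- the r+2 multiples 0, m, ..., (r+1)m are in T
    have hinj : Function.Injective (fun j : ℕ => j * m) := fun x y h =>
      Nat.eq_of_mul_eq_mul_right (Nat.pos_of_ne_zero hm0) h
    set F : Finset ℕ := (Finset.range (r + 2)).image (fun j => j * m) with hF
    have hFcard : F.card = r + 2 := by
      rw [hF, Finset.card_image_of_injective _ hinj, Finset.card_range]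
    have hFsub : (F : Set ℕ) ⊆ T := by
      intro x hx
      simp only [hF, Finset.coe_image, Finset.coe_range, Set.mem_image] at hx
      obtain ⟨j, hj, rfl⟩ := hx
      simp only [Set.mem_Iio] at hj
      refine ⟨hmulS j m hmS, ?_⟩
      have h1 : j * m ≤ (r + 1) * m := Nat.mul_le_mul_right m (by omega)
      have h2 : (r + 1) * m ≤ r * q := by
        have hmr : m ≤ r := by omega
        calc (r + 1) * m = r * m + m := by ring
          _ ≤ r * m + r := by omega
          _ = r * (m + 1) := by ring
          _ ≤ r * q := Nat.mul_le_mul_left r (by omega)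
      omega
    have := Set.ncard_le_ncard hFsub hTfin
    rw [Set.ncard_coe_finset, hFcard, hTcard] at this
    omega
  -- Step 2: T = multiples of q
  set U : Finset ℕ := (Finset.range (r + 1)).image (fun i => i * q) with hU
  have hinjq : Function.Injective (fun i : ℕ => i * q) := fun x y h =>
    Nat.eq_of_mul_eq_mul_right (by omega) h
  have hUcard : U.card = r + 1 := by
    rw [hU, Finset.card_image_of_injective _ hinjq, Finset.card_range]
  have hUsub : (U : Set ℕ) ⊆ T := by
    intro x hx
    simp only [hU, Finset.coe_image, Finset.coe_range, Set.mem_image] at hx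
    obtain ⟨i, hi, rfl⟩ := hx
    simp only [Set.mem_Iio] at hi
    exact ⟨hmulS i q hqS, Nat.mul_le_mul_right q (by omega)⟩
  have hTU : (U : Set ℕ) = T := by
    apply Set.eq_of_subset_of_ncard_le hUsub _ hTfin
    rw [Set.ncard_coe_finset, hUcard, hTcard]
  refine ⟨hqS, fun m hm hm1 hmrq => ?_⟩
  have hmT : m ∈ T := ⟨hm, hmrq⟩
  rw [← hTU] at hmT
  simp only [hU, Finset.coe_image, Finset.coe_range, Set.mem_image] at hmT
  obtain ⟨i, _, rfl⟩ := hmT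
  exact ⟨i, by ring⟩
end

section
/- Let S be a numerical semigroup of genus g with 2 ∈ S, and let r ≥ 1 be an integer such that L(2i) = i + 1 for all 1 ≤ i ≤ r, L(g + r) = r + 1, and 2r ≤ g + r. Then g − 1 ≤ r ≤ g. (This is the paper's proposition: if q = 2, K is hyperelliptic, and K has an r-gap structure at ∞, then g − 1 ≤ r ≤ g, where g is the genus of K; hyperellipticity with the paper's model gives 2 ∈ S.) -/
theorem div_add_one_le_NSL {S : AddSubmonoid ℕ} {d : ℕ} (hd : d ∈ S) (hd0 : 0 < d) (n : ℕ) :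
    n / d + 1 ≤ NSL S n := by
  have hmul : (· * d) '' Set.Iic (n / d) ⊆ {m : ℕ | m ∈ S ∧ m ≤ n} := by
    rintro _ ⟨k, hk, rfl⟩
    exact ⟨by simpa using S.nsmul_mem hd k, (Nat.le_div_iff_mul_le hd0).mp hk⟩
  calc n / d + 1 = ((· * d) '' Set.Iic (n / d)).ncard := by
        rw [Set.ncard_image_of_injective _ (mul_left_injective₀ hd0.ne'),
          ← Finset.coe_Iic, Set.ncard_coe_finset, Nat.card_Iic]
    _ ≤ NSL S n := Set.ncard_le_ncard hmul ((Set.finite_Iic n).subset fun _ hm => hm.2)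

theorem statement9_general (S : AddSubmonoid ℕ)
    (g r : ℕ) (h2 : 2 ∈ S)
    (hgap2 : NSL S (g + r) = r + 1)
    (hgap3 : 2 * r ≤ g + r) :
    g - 1 ≤ r ∧ r ≤ g := by
  -- `(g + r) / 2 ≤ r` forces `g ≤ r + 1`
  have hL : (g + r) / 2 + 1 ≤ NSL S (g + r) := div_add_one_le_NSL h2 two_pos (g + r)
  omega

/-- Let `S` be a numerical semigroup of genus `g` with `2 ∈ S`, and let
`r ≥ 1` be an integer such that `L(2i) = i + 1` for all `1 ≤ i ≤ r`, `L(g + r) = r + 1`, and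
`2r ≤ g + r`.  Then `g − 1 ≤ r ≤ g`.  (If `q = 2`, `K` is hyperelliptic and `K` has an
`r`-gap structure at `∞`, then `g − 1 ≤ r ≤ g`, `g` the genus of `K`.) -/
theorem statement9 (S : AddSubmonoid ℕ) (hfin : ((S : Set ℕ)ᶜ).Finite)
    (g r : ℕ) (hg : NSgenus S = g) (h2 : 2 ∈ S) (hr : 1 ≤ r)
    (hgap1 : ∀ i : ℕ, 1 ≤ i → i ≤ r → NSL S (2 * i) = i + 1)
    (hgap2 : NSL S (g + r) = r + 1)
    (hgap3 : 2 * r ≤ g + r) :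
    g - 1 ≤ r ∧ r ≤ g :=
  statement9_general S g r h2 hgap2 hgap3
end

section
/- Let A := F_3[x][y]/(y² − x(x+1)(x+2)(x²+1)), an integral domain over F_3, and for nonzero a ∈ A let deg a := dim_{F_3}(A/aA). Then ∑_{d≥0} (∑_{a ∈ A∖{0}, deg a = d} a²) X^d = X² − 1 in A[X]; in particular the inner sums vanish for all d ∉ {0, 2}, and the zeta value ζ(−2) of A is 0 with order of vanishing exactly 1 (so Thakur's hyperelliptic order-2 theorem fails for q = 3 even though l_3(2) = 2 = g). -/
/-! Write `a = p + q y` with `p, q ∈ F₃[x]`. The degree `dim A/aA` is the `x`-degree of the norm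
`p² - f q²`, which is `max (2 deg p) (2 deg q + 5)` because `deg f = 5` is odd. So the elements of
degree below 5 lie in `F₃[x]`: degree 0 gives the constants `1, 2`, degree 2 the linear
polynomials `c x + b` with `c ≠ 0`, and no element has degree 1. For `d ≥ 3` the elements of
degree `d` fall into orbits under translation by the nine polynomials `c x + b`, and over each
orbit `∑ (a + c x + b)²` vanishes because `∑_b 1 = ∑_b b = 0` in `F₃`. What is left is
`1² + 2² = -1` in degree 0 and, since the squares of all `c x + b` also sum to 0, `+1` in
degree 2. -/

open Polynomial

/-- The degree of a nonzero element `a` of a ring `A` containing a field `F`: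
`deg a = dim_F (A / aA)`. -/
noncomputable def adeg (F : Type*) {A : Type*} [Field F] [CommRing A] [Algebra F A]
    (a : A) : ℕ :=
  Module.finrank F (A ⧸ Ideal.span {a})

/-- A positive integer `m` is a gap of `A` (at `∞`) if no nonzero `a ∈ A` has `deg a = m`. -/
def IsGapA (F : Type*) (A : Type*) [Field F] [CommRing A] [Algebra F A] (m : ℕ) : Prop :=
  ¬ ∃ a : A, a ≠ 0 ∧ adeg F a = m

/-- The `d`-th coefficient `∑_{a ∈ A∖{0}, deg a = d} a^s` of the zeta polynomial of `A`. -/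
noncomputable def zetaCoeff (F : Type*) {A : Type*} [Field F] [CommRing A] [Algebra F A]
    (s d : ℕ) : A :=
  ∑ᶠ a ∈ {a : A | a ≠ 0 ∧ adeg F a = d}, a ^ s

/-- The zeta polynomial `Z_s(X) = ∑_{d ≥ 0} (∑_{a ∈ A∖{0}, deg a = d} a^s) X^d ∈ A[X]`. -/
noncomputable def zetaPoly (F : Type*) (A : Type*) [Field F] [CommRing A] [Algebra F A]
    (s : ℕ) : Polynomial A :=
  ∑ᶠ d : ℕ, C (zetaCoeff F s d) * X ^ d

/-- The coordinate ring `A = F_3[x][y]/(y² − x(x+1)(x+2)(x²+1))` of the genus-2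
hyperelliptic curve `y² = x(x+1)(x+2)(x²+1)` over `F_3`. -/
noncomputable abbrev A15 : Type :=
  AdjoinRoot (X ^ 2 - C (X * (X + 1) * (X + 2) * (X ^ 2 + 1) : Polynomial (ZMod 3)) :
    (Polynomial (ZMod 3))[X])

namespace AdjoinRoot

variable {R : Type*} [CommRing R] (c : R)

lemma root_X_sq_sub_C_sq : root (X ^ 2 - C c) ^ 2 = algebraMap R _ c := by
  have h := eval₂_root (X ^ 2 - C c)
  simp only [eval₂_sub, eval₂_X_pow, eval₂_C] at h
  exact sub_eq_zero.mp h

variable [Nontrivial R]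

noncomputable def sqrtBasis : Module.Basis (Fin 2) R (AdjoinRoot (X ^ 2 - C c)) :=
  (powerBasis' (monic_X_pow_sub_C c two_ne_zero)).basis.reindex (finCongr natDegree_X_pow_sub_C)

lemma sqrtBasis_apply (i : Fin 2) : sqrtBasis c i = root (X ^ 2 - C c) ^ (i : ℕ) := by
  simp only [sqrtBasis, Module.Basis.coe_reindex, PowerBasis.coe_basis, powerBasis'_gen,
    Function.comp_apply]
  rfl

noncomputable def sqrtCoords : (R × R) ≃ₗ[R] AdjoinRoot (X ^ 2 - C c) :=
  (LinearEquiv.finTwoArrow R R).symm.trans (sqrtBasis c).equivFun.symm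

lemma sqrtCoords_apply (p q : R) : sqrtCoords c (p, q) = p • 1 + q • root (X ^ 2 - C c) := by
  simp [sqrtCoords, Fin.sum_univ_two, sqrtBasis_apply]

lemma sqrtBasis_repr_sqrtCoords (p q : R) :
    (sqrtBasis c).repr (sqrtCoords c (p, q)) = ![p, q] := by
  ext i
  fin_cases i <;> simp [sqrtCoords]

lemma sqrtCoords_mul_root (p q : R) :
    sqrtCoords c (p, q) * root (X ^ 2 - C c) = sqrtCoords c (c * q, p) := by
  simp only [sqrtCoords_apply, add_mul, smul_mul_assoc, one_mul, ← sq, root_X_sq_sub_C_sq,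
    Algebra.algebraMap_eq_smul_one, smul_smul]
  rw [add_comm, mul_comm]

lemma norm_sqrtCoords (p q : R) :
    Algebra.norm R (sqrtCoords c (p, q)) = p ^ 2 - c * q ^ 2 := by
  rw [Algebra.norm_eq_matrix_det (sqrtBasis c), Matrix.det_fin_two]
  simp only [Algebra.leftMulMatrix_eq_repr_mul, sqrtBasis_apply, Fin.val_zero, Fin.val_one,
    pow_zero, pow_one, mul_one, sqrtCoords_mul_root, sqrtBasis_repr_sqrtCoords,
    Matrix.cons_val_zero, Matrix.cons_val_one, Matrix.cons_val_fin_one]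
  ring

end AdjoinRoot

section OddDegree

variable {R : Type*} [CommRing R] [IsDomain R] {f : R[X]}

lemma natDegree_sq_sub_mul_sq (hf : Odd f.natDegree) (p : R[X]) {q : R[X]} (hq : q ≠ 0) :
    (p ^ 2 - f * q ^ 2).natDegree = max (2 * p.natDegree) (2 * q.natDegree + f.natDegree) := by
  have hf0 : f ≠ 0 := by rintro rfl; simp at hf
  have hp2 : (p ^ 2).natDegree = 2 * p.natDegree := by rw [natDegree_pow, mul_comm]
  have hfq2 : (f * q ^ 2).natDegree = 2 * q.natDegree + f.natDegree := by
    rw [natDegree_mul hf0 (pow_ne_zero 2 hq), natDegree_pow]; ring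
  obtain ⟨k, hk⟩ := hf
  rcases lt_or_gt_of_ne (show 2 * p.natDegree ≠ 2 * q.natDegree + f.natDegree by omega) with h | h
  · rw [natDegree_sub_eq_right_of_natDegree_lt (by omega), hfq2]; omega
  · rw [natDegree_sub_eq_left_of_natDegree_lt (by omega), hp2]; omega

lemma natDegree_le_natDegree_sq_sub_mul_sq (hf : Odd f.natDegree) (p q : R[X]) :
    p.natDegree ≤ (p ^ 2 - f * q ^ 2).natDegree ∧ q.natDegree ≤ (p ^ 2 - f * q ^ 2).natDegree := by
  rcases eq_or_ne q 0 with rfl | hq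
  · simp only [ne_eq, OfNat.ofNat_ne_zero, not_false_eq_true, zero_pow, mul_zero, sub_zero,
      natDegree_pow, natDegree_zero, zero_le, and_true]
    omega
  · rw [natDegree_sq_sub_mul_sq hf p hq]; obtain ⟨k, hk⟩ := hf; omega

lemma natDegree_add_sq_sub_mul_sq (hf : Odd f.natDegree) {p q ℓ : R[X]} (hℓ : ℓ.natDegree ≤ 1)
    (hd : 3 ≤ (p ^ 2 - f * q ^ 2).natDegree) :
    ((p + ℓ) ^ 2 - f * q ^ 2).natDegree = (p ^ 2 - f * q ^ 2).natDegree := by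
  rcases eq_or_ne q 0 with rfl | hq
  · simp only [ne_eq, OfNat.ofNat_ne_zero, not_false_eq_true, zero_pow, mul_zero, sub_zero,
      natDegree_pow] at hd ⊢
    rw [natDegree_add_eq_left_of_natDegree_lt (by omega)]
  · rw [natDegree_sq_sub_mul_sq hf p hq] at hd ⊢
    rw [natDegree_sq_sub_mul_sq hf _ hq]
    have := natDegree_add_le p ℓ
    rcases le_or_gt 2 p.natDegree with hp | hp
    · rw [natDegree_add_eq_left_of_natDegree_lt (by omega)]
    · omega

lemma setOf_natDegree_sq_sub_mul_sq_eq_of_lt (hf : Odd f.natDegree) {d : ℕ} (hd : d < f.natDegree) :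
    {x : R[X] × R[X] | (x.1 ^ 2 - f * x.2 ^ 2).natDegree = d} =
      (fun p => (p, 0)) '' {p | 2 * p.natDegree = d} := by
  ext ⟨p, q⟩
  simp only [Set.mem_ofPred_eq, Set.mem_image, Prod.mk.injEq]
  rcases eq_or_ne q 0 with rfl | hq
  · simp [natDegree_pow]
  · rw [natDegree_sq_sub_mul_sq hf p hq]
    constructor
    · omega
    · rintro ⟨p, -, -, rfl⟩
      exact absurd rfl hq

lemma irreducible_X_sq_sub_C (hf : Odd f.natDegree) : Irreducible (X ^ 2 - C f) := by
  have hmonic := monic_X_pow_sub_C f two_ne_zero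
  rw [hmonic.irreducible_iff_roots_eq_zero_of_degree_le_three (by rw [natDegree_X_pow_sub_C])
    (by rw [natDegree_X_pow_sub_C]; norm_num)]
  refine Multiset.eq_zero_of_forall_notMem fun r hr => ?_
  rw [mem_roots hmonic.ne_zero, IsRoot, eval_sub, eval_pow, eval_X, eval_C, sub_eq_zero] at hr
  rw [← hr, natDegree_pow] at hf
  exact Nat.not_odd_iff_even.mpr (even_two_mul _) hf

end OddDegree

namespace FiniteField

variable {F A : Type*} [Field F] [Fintype F] [CommRing A] [Algebra F A]

lemma sum_sq_add_smul (hF : 2 < Fintype.card F) (w v : A) :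
    ∑ b : F, (w + b • v) ^ 2 = (∑ b : F, b ^ 2) • v ^ 2 := by
  have hsum : ∑ b : F, b = 0 := by
    simpa using sum_pow_lt_card_sub_one F 1 (by omega)
  have hcard : ∑ _b : F, w ^ 2 = 0 := by
    rw [Finset.sum_const, Finset.card_univ, ← Nat.cast_smul_eq_nsmul F, cast_card_eq_zero,
      zero_smul]
  have hexpand : ∀ b : F, (w + b • v) ^ 2 = w ^ 2 + b • (2 * w * v) + b ^ 2 • v ^ 2 := by
    intro b
    simp only [Algebra.smul_def, map_pow]
    ring
  simp only [hexpand, Finset.sum_add_distrib, hcard, ← Finset.sum_smul, hsum, zero_smul,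
    zero_add]

lemma sum_sq_add_smul_add_smul (hF : 2 < Fintype.card F) (a u v : A) :
    ∑ g : F × F, (a + (g.1 • u + g.2 • v)) ^ 2 = 0 := by
  simp only [Fintype.sum_prod_type, ← add_assoc, sum_sq_add_smul hF, Finset.sum_const,
    Finset.card_univ, ← Nat.cast_smul_eq_nsmul F, cast_card_eq_zero, zero_smul]

end FiniteField

lemma Finset.sum_eq_zero_of_forall_add_mem {A M G : Type*} [AddCommGroup A] [AddCommMonoid M]
    [AddGroup G] [Fintype G] (β : G →+ A) (hβ : Function.Injective β) {S : Finset A}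
    (hS : ∀ a ∈ S, ∀ g, a + β g ∈ S) (f : A → M) (hf : ∀ a, ∑ g, f (a + β g) = 0) :
    ∑ a ∈ S, f a = 0 := by
  classical
  let π : A → A ⧸ β.range := QuotientAddGroup.mk
  rw [← Finset.sum_fiberwise_of_maps_to (fun a ha => Finset.mem_image_of_mem π ha)]
  refine Finset.sum_eq_zero fun y hy => ?_
  obtain ⟨a₀, ha₀, rfl⟩ := Finset.mem_image.mp hy
  have hfiber : S.filter (fun a => π a = π a₀) = Finset.univ.image (fun g => a₀ + β g) := by
    ext a
    simp only [Finset.mem_filter, Finset.mem_image, Finset.mem_univ, true_and, π,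
      QuotientAddGroup.eq_iff_sub_mem, AddMonoidHom.mem_range]
    constructor
    · rintro ⟨-, g, hg⟩
      exact ⟨g, by rw [hg]; abel⟩
    · rintro ⟨g, rfl⟩
      exact ⟨hS a₀ ha₀ g, g, by abel⟩
  rw [hfiber, Finset.sum_image fun g _ g' _ h => hβ (add_left_cancel h)]
  exact hf a₀

lemma Polynomial.finite_setOf_natDegree_le {F : Type*} [CommRing F] [Finite F] (n : ℕ) :
    {p : F[X] | p.natDegree ≤ n}.Finite := by
  have : Finite (degreeLT F (n + 1)) := Finite.of_equiv _ (degreeLTEquiv F (n + 1)).symm.toEquiv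
  refine (Set.toFinite (degreeLT F (n + 1) : Set F[X])).subset fun p hp => ?_
  rw [SetLike.mem_coe, mem_degreeLT]
  exact degree_le_natDegree.trans_lt (by exact_mod_cast Nat.lt_succ_of_le hp)

section LinearPoly

variable {F : Type*} [CommRing F]

noncomputable def linearPoly (F : Type*) [CommRing F] : F × F →+ F[X] :=
  AddMonoidHom.mk' (fun g => C g.1 * X + C g.2) fun g h => by
    simp only [Prod.fst_add, Prod.snd_add, map_add]; ring

lemma linearPoly_apply (g : F × F) : linearPoly F g = C g.1 * X + C g.2 :=
  rfl

lemma linearPoly_injective : Function.Injective (linearPoly F) := by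
  intro g h hgh
  have h1 := congrArg (coeff · 1) hgh
  have h0 := congrArg (coeff · 0) hgh
  simp only [linearPoly_apply, coeff_add, mul_coeff_zero, coeff_C_zero, coeff_X_zero, mul_zero,
    zero_add, coeff_mul_X, coeff_C_succ, add_zero] at h0 h1
  exact Prod.ext h1 h0

lemma range_linearPoly : Set.range (linearPoly F) = {p | p.natDegree ≤ 1} := by
  ext p
  refine ⟨?_, fun hp => ⟨(p.coeff 1, p.coeff 0), (eq_X_add_C_of_natDegree_le_one hp).symm⟩⟩
  rintro ⟨g, rfl⟩
  exact natDegree_linear_le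

lemma linearPoly_smul_one {A : Type*} [CommRing A] [Algebra F A] [Algebra F[X] A]
    [IsScalarTower F F[X] A] (g : F × F) :
    linearPoly F g • (1 : A) = g.1 • (X : F[X]) • (1 : A) + g.2 • (1 : A) := by
  rw [linearPoly_apply, ← Polynomial.algebraMap_eq, add_smul, mul_smul, algebraMap_smul,
    algebraMap_smul]

end LinearPoly

section Hyperelliptic

variable {F : Type*} [Field F] {f : F[X]}

open AdjoinRoot

lemma isDomain_adjoinRoot_X_sq_sub_C (hf : Odd f.natDegree) :
    IsDomain (AdjoinRoot (X ^ 2 - C f)) :=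
  isDomain_of_prime (irreducible_X_sq_sub_C hf).prime

lemma adeg_sqrtCoords (hf : Odd f.natDegree) {x : F[X] × F[X]} (hx : x ≠ 0) :
    adeg F (sqrtCoords f x) = (x.1 ^ 2 - f * x.2 ^ 2).natDegree := by
  have := isDomain_adjoinRoot_X_sq_sub_C hf
  rw [adeg, finrank_quotient_span_eq_natDegree_norm (sqrtBasis f)
    ((map_ne_zero_iff _ (sqrtCoords f).injective).mpr hx), norm_sqrtCoords]

/-- `zetaCoeff` excludes `a = 0`; for `s ≠ 0` it may be put back, as it contributes `0 ^ s = 0`. -/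
lemma zetaCoeff_eq_finsum_sqrtCoords (hf : Odd f.natDegree) {s : ℕ} (hs : s ≠ 0) (d : ℕ) :
    zetaCoeff F (A := AdjoinRoot (X ^ 2 - C f)) s d =
      ∑ᶠ x ∈ {x : F[X] × F[X] | (x.1 ^ 2 - f * x.2 ^ 2).natDegree = d}, sqrtCoords f x ^ s := by
  have hset : {a : AdjoinRoot (X ^ 2 - C f) | a ≠ 0 ∧ adeg F a = d} =
      sqrtCoords f '' {x | x ≠ 0 ∧ (x.1 ^ 2 - f * x.2 ^ 2).natDegree = d} := by
    ext a
    obtain ⟨x, rfl⟩ := (sqrtCoords f).surjective a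
    simp only [Set.mem_ofPred_eq, (sqrtCoords f).injective.mem_set_image,
      map_ne_zero_iff _ (sqrtCoords f).injective]
    exact and_congr_right fun hx => by rw [adeg_sqrtCoords hf hx]
  rw [zetaCoeff, hset, finsum_mem_image (sqrtCoords f).injective.injOn]
  refine finsum_mem_inter_support_eq _ _ _ (Set.ext fun x => ?_)
  simp only [Set.mem_inter_iff, Set.mem_ofPred_eq, Function.mem_support]
  refine ⟨fun ⟨⟨_, hd⟩, hx⟩ => ⟨hd, hx⟩, fun ⟨hd, hx⟩ => ⟨⟨?_, hd⟩, hx⟩⟩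
  rintro rfl
  simp [hs] at hx

lemma finite_setOf_natDegree_sq_sub_mul_sq_eq [Finite F] (hf : Odd f.natDegree) (d : ℕ) :
    {x : F[X] × F[X] | (x.1 ^ 2 - f * x.2 ^ 2).natDegree = d}.Finite :=
  ((finite_setOf_natDegree_le d).prod (finite_setOf_natDegree_le d)).subset fun x (hx : _ = d) =>
    hx ▸ natDegree_le_natDegree_sq_sub_mul_sq hf x.1 x.2

theorem zetaCoeff_two_eq_zero_of_three_le [Fintype F] (hF : 2 < Fintype.card F)
    (hf : Odd f.natDegree) {d : ℕ} (hd : 3 ≤ d) :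
    zetaCoeff F (A := AdjoinRoot (X ^ 2 - C f)) 2 d = 0 := by
  rw [zetaCoeff_eq_finsum_sqrtCoords hf two_ne_zero,
    finsum_mem_eq_finite_toFinset_sum _ (finite_setOf_natDegree_sq_sub_mul_sq_eq hf d)]
  refine Finset.sum_eq_zero_of_forall_add_mem ((AddMonoidHom.inl _ _).comp (linearPoly F))
    ((Prod.mk_left_injective 0).comp linearPoly_injective) ?_ _ fun x => ?_
  · rintro ⟨p, q⟩ hx g
    simp only [Set.Finite.mem_toFinset, Set.mem_ofPred_eq, AddMonoidHom.coe_comp,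
      Function.comp_apply, AddMonoidHom.inl_apply, Prod.mk_add_mk, add_zero] at hx ⊢
    rw [← hx] at hd ⊢
    exact natDegree_add_sq_sub_mul_sq hf natDegree_linear_le hd
  · simp only [AddMonoidHom.coe_comp, Function.comp_apply, AddMonoidHom.inl_apply, map_add,
      sqrtCoords_apply, zero_smul, add_zero, linearPoly_smul_one]
    exact FiniteField.sum_sq_add_smul_add_smul hF _ _ _

lemma zetaCoeff_eq_finsum_of_lt (hf : Odd f.natDegree) {s : ℕ} (hs : s ≠ 0) {d : ℕ}
    (hd : d < f.natDegree) :
    zetaCoeff F (A := AdjoinRoot (X ^ 2 - C f)) s d =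
      ∑ᶠ p ∈ {p : F[X] | 2 * p.natDegree = d}, algebraMap F[X] _ p ^ s := by
  rw [zetaCoeff_eq_finsum_sqrtCoords hf hs, setOf_natDegree_sq_sub_mul_sq_eq_of_lt hf hd,
    finsum_mem_image (Prod.mk_left_injective 0).injOn]
  simp only [sqrtCoords_apply, zero_smul, add_zero, Algebra.algebraMap_eq_smul_one]

lemma zetaCoeff_one (hf : Odd f.natDegree) (hf1 : 1 < f.natDegree) {s : ℕ} (hs : s ≠ 0) :
    zetaCoeff F (A := AdjoinRoot (X ^ 2 - C f)) s 1 = 0 := by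
  rw [zetaCoeff_eq_finsum_of_lt hf hs hf1]
  convert finsum_mem_empty
  ext p
  simp only [Set.mem_ofPred_eq, Set.mem_empty_iff_false, iff_false]
  omega

lemma zetaCoeff_zero [Fintype F] (hf : Odd f.natDegree) :
    zetaCoeff F (A := AdjoinRoot (X ^ 2 - C f)) 2 0 = algebraMap F _ (∑ b : F, b ^ 2) := by
  have hrange : {p : F[X] | 2 * p.natDegree = 0} = Set.range C := by
    ext p
    simp [natDegree_eq_zero]
  rw [zetaCoeff_eq_finsum_of_lt hf two_ne_zero hf.pos, hrange, finsum_mem_range C_injective,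
    finsum_eq_sum_of_fintype, map_sum]
  simp [IsScalarTower.algebraMap_apply F F[X] (AdjoinRoot (X ^ 2 - C f))]

lemma zetaCoeff_zero_add_zetaCoeff_two [Fintype F] (hF : 2 < Fintype.card F)
    (hf : Odd f.natDegree) (hf2 : 2 < f.natDegree) :
    zetaCoeff F (A := AdjoinRoot (X ^ 2 - C f)) 2 0 + zetaCoeff F 2 2 = 0 := by
  have hunion : {p : F[X] | 2 * p.natDegree = 0} ∪ {p | 2 * p.natDegree = 2} =
      Set.range (linearPoly F) := by
    rw [range_linearPoly]
    ext p
    simp only [Set.mem_union, Set.mem_ofPred_eq]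
    omega
  have hfin (d : ℕ) : {p : F[X] | 2 * p.natDegree = d}.Finite :=
    (finite_setOf_natDegree_le d).subset fun p (hp : _ = d) => show _ ≤ d by omega
  have hdisj : Disjoint {p : F[X] | 2 * p.natDegree = 0} {p | 2 * p.natDegree = 2} :=
    Set.disjoint_left.mpr fun p (h0 : _ = 0) (h2 : _ = 2) => by omega
  rw [zetaCoeff_eq_finsum_of_lt hf two_ne_zero hf.pos,
    zetaCoeff_eq_finsum_of_lt hf two_ne_zero hf2, ← finsum_mem_union hdisj (hfin 0) (hfin 2),
    hunion, finsum_mem_range linearPoly_injective, finsum_eq_sum_of_fintype]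
  simp only [Algebra.algebraMap_eq_smul_one, linearPoly_smul_one]
  simpa only [zero_add] using
    FiniteField.sum_sq_add_smul_add_smul hF (0 : AdjoinRoot (X ^ 2 - C f)) _ _

end Hyperelliptic

lemma rootMultiplicity_one_X_sq_sub_one {A : Type*} [CommRing A] [IsDomain A] (h2 : (2 : A) ≠ 0) :
    rootMultiplicity 1 (X ^ 2 - 1 : A[X]) = 1 := by
  classical
  have hfactor : (X ^ 2 - 1 : A[X]) = (X - C 1) * (X - C (-1)) := by
    simp only [map_neg, map_one]; ring
  have hne : (1 : A) ≠ -1 := fun h => h2 (by linear_combination h)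
  rw [hfactor, rootMultiplicity_mul (hfactor ▸ (monic_X_pow_sub_C 1 two_ne_zero).ne_zero),
    rootMultiplicity_X_sub_C, rootMultiplicity_X_sub_C, if_pos rfl, if_neg hne]

section A15

local notation "f₁₅" => (X * (X + 1) * (X + 2) * (X ^ 2 + 1) : (ZMod 3)[X])

lemma natDegree_f₁₅ : (f₁₅).natDegree = 5 := by
  compute_degree!

lemma odd_natDegree_f₁₅ : Odd (f₁₅).natDegree := by
  rw [natDegree_f₁₅]; decide

lemma zetaCoeff_A15_zero : zetaCoeff (ZMod 3) (A := A15) 2 0 = -1 := by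
  rw [zetaCoeff_zero odd_natDegree_f₁₅, show ∑ b : ZMod 3, b ^ 2 = -1 by decide, map_neg, map_one]

lemma zetaCoeff_A15_two : zetaCoeff (ZMod 3) (A := A15) 2 2 = 1 := by
  have h := zetaCoeff_zero_add_zetaCoeff_two (by rw [ZMod.card]; norm_num) odd_natDegree_f₁₅
    (by rw [natDegree_f₁₅]; norm_num)
  rw [zetaCoeff_A15_zero] at h
  linear_combination h

lemma zetaCoeff_A15_eq_zero {d : ℕ} (h0 : d ≠ 0) (h2 : d ≠ 2) :
    zetaCoeff (ZMod 3) (A := A15) 2 d = 0 := by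
  obtain rfl | hd : d = 1 ∨ 3 ≤ d := by omega
  · exact zetaCoeff_one odd_natDegree_f₁₅ (by rw [natDegree_f₁₅]; norm_num) two_ne_zero
  · exact zetaCoeff_two_eq_zero_of_three_le (by rw [ZMod.card]; norm_num) odd_natDegree_f₁₅ hd

lemma zetaPoly_A15 : zetaPoly (ZMod 3) A15 2 = X ^ 2 - 1 := by
  rw [zetaPoly, finsum_eq_sum_of_support_subset (s := {0, 2}) _ fun d hd => ?_,
    Finset.sum_pair two_ne_zero.symm, zetaCoeff_A15_zero, zetaCoeff_A15_two]
  · simp only [map_neg, map_one, pow_zero, mul_one, one_mul]; ring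
  · by_contra hd'
    simp only [Finset.coe_insert, Finset.coe_singleton, Set.mem_insert_iff,
      Set.mem_singleton_iff, not_or] at hd'
    simp [zetaCoeff_A15_eq_zero hd'.1 hd'.2] at hd

lemma two_ne_zero_A15 : (2 : A15) ≠ 0 := by
  rw [← map_ofNat (algebraMap (ZMod 3) A15) 2]
  have := isDomain_adjoinRoot_X_sq_sub_C odd_natDegree_f₁₅
  exact (map_ne_zero_iff _ (algebraMap (ZMod 3) A15).injective).mpr (by decide)

end A15

/-- For `A = F_3[x][y]/(y² − x(x+1)(x+2)(x²+1))` one has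
`∑_{d ≥ 0} (∑_{a ∈ A∖{0}, deg a = d} a²) X^d = X² − 1` in `A[X]`; in particular the inner
sums vanish for all `d ∉ {0, 2}`, the zeta value `ζ(−2)` of `A` is `0`, and its order of
vanishing is exactly `1` (so Thakur's hyperelliptic order-2 theorem fails for `q = 3` even
though `l_3(2) = 2 = g`). -/
theorem statement15 :
    zetaPoly (ZMod 3) A15 2 = X ^ 2 - 1 ∧
      (∀ d : ℕ, d ≠ 0 → d ≠ 2 → zetaCoeff (ZMod 3) (A := A15) 2 d = 0) ∧
      Polynomial.eval 1 (zetaPoly (ZMod 3) A15 2) = 0 ∧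
      rootMultiplicity 1 (zetaPoly (ZMod 3) A15 2) = 1 := by
  have := isDomain_adjoinRoot_X_sq_sub_C odd_natDegree_f₁₅
  refine ⟨zetaPoly_A15, fun d => zetaCoeff_A15_eq_zero, ?_, ?_⟩
  · simp [zetaPoly_A15]
  · rw [zetaPoly_A15, rootMultiplicity_one_X_sq_sub_one two_ne_zero_A15]
end
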